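/- In an irreducible n-partite orthogonal product basis S = {|a_{j,1}⟩⊗...⊗|a_{j,n}⟩ : j = 0,...,d₁⋯dₙ−1} of ℂ^{d₁}⊗...⊗ℂ^{dₙ}, any nonzero vector |α⟩ ∈ ℂ^{d₁} is orthogonal (counting multiplicity) to at most d₁d₂⋯dₙ − d₂⋯dₙ − 1 of the first-factor vectors |a_{0,1}⟩,...,|a_{d₁⋯dₙ−1,1}⟩. -/

import Mathlib

open scoped ComplexInnerProductSpace Matrix
noncomputable section
/-- The state space of an `n`-partite system with local dimensions `d i`,
modelling `ℂ^{d 0} ⊗ ... ⊗ ℂ^{d (n-1)}`. -/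
abbrev GState {n : ℕ} (d : Fin n → ℕ) := EuclideanSpace ℂ (∀ i, Fin (d i))
/-- The product state `v 0 ⊗ v 1 ⊗ ... ⊗ v (n-1)`. -/
def prodState {n : ℕ} (d : Fin n → ℕ) (v : ∀ i, EuclideanSpace ℂ (Fin (d i))) : GState d :=
  WithLp.toLp 2 fun (x : ∀ i, Fin (d i)) => ∏ i, v i (x i)
/-- A family of product states (given by their local factors `a j`) is reducible at
party `p` if the states split into two nonempty groups whose `p`-th factors are
mutually orthogonal. -/
def ReducibleAt {n : ℕ} {d : Fin n → ℕ} {J : Type}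
    (a : J → ∀ i, EuclideanSpace ℂ (Fin (d i))) (p : Fin n) : Prop :=
  ∃ T : Set J, T.Nonempty ∧ Tᶜ.Nonempty ∧ ∀ j ∈ T, ∀ k ∈ Tᶜ, ⟪a j p, a k p⟫ = 0

/-! The product states whose first factor is orthogonal to `α` are orthogonal to the subspace
`α ⊗ ℂ^{d₂} ⊗ ⋯ ⊗ ℂ^{dₙ}`, of dimension `d₂⋯dₙ`, so there are at most `d₁⋯dₙ - d₂⋯dₙ` of them.
If there were exactly that many, they would span the orthogonal complement of that subspace.
Every other state of the basis would then lie in `α ⊗ ℂ^{d₂} ⊗ ⋯ ⊗ ℂ^{dₙ}`, so its first factor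
would be parallel to `α` and orthogonal to the first factors of the former group, making the basis
`A₁`-reducible. -/

open Module
open scoped InnerProductSpace

namespace Submodule

variable {𝕜 E : Type*} [RCLike 𝕜] [NormedAddCommGroup E] [InnerProductSpace 𝕜 E]

theorem finrank_span_eq_card_of_inner_eq_zero {ι : Type*} [Fintype ι] {v : ι → E}
    (hz : ∀ i, v i ≠ 0) (ho : Pairwise fun i j => ⟪v i, v j⟫_𝕜 = 0) :
    finrank 𝕜 (span 𝕜 (Set.range v)) = Fintype.card ι :=
  finrank_span_eq_card (linearIndependent_of_ne_zero_of_inner_eq_zero hz ho)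

variable [FiniteDimensional 𝕜 E] {U W : Submodule 𝕜 E}

theorem IsOrtho.finrank_add_le (h : U ⟂ W) : finrank 𝕜 U + finrank 𝕜 W ≤ finrank 𝕜 E := by
  rw [← U.finrank_add_finrank_orthogonal]
  exact Nat.add_le_add_left (finrank_mono h.ge) _

theorem IsOrtho.eq_orthogonal_of_finrank_add_eq (h : U ⟂ W)
    (hd : finrank 𝕜 U + finrank 𝕜 W = finrank 𝕜 E) : W = Uᗮ :=
  eq_of_le_of_finrank_eq h.ge (by have := U.finrank_add_finrank_orthogonal; omega)

end Submodule

theorem finrank_gState {n : ℕ} (d : Fin n → ℕ) : finrank ℂ (GState d) = ∏ i, d i := by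
  simp [Fintype.card_pi]

theorem inner_prodState {n : ℕ} (d : Fin n → ℕ) (u v : ∀ i, EuclideanSpace ℂ (Fin (d i))) :
    ⟪prodState d u, prodState d v⟫ = ∏ i, ⟪u i, v i⟫ := by
  simp only [PiLp.inner_apply, RCLike.inner_apply, prodState, map_prod, ← Finset.prod_mul_distrib]
  exact (Fintype.prod_sum fun i t => v i t * (starRingEnd ℂ) (u i t)).symm

theorem inner_prodState_eq_zero {n : ℕ} {d : Fin n → ℕ} {u v : ∀ i, EuclideanSpace ℂ (Fin (d i))}
    (p : Fin n) (h : ⟪u p, v p⟫ = 0) : ⟪prodState d u, prodState d v⟫ = 0 := by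
  rw [inner_prodState]
  exact Finset.prod_eq_zero (Finset.mem_univ p) h

theorem prodState_ne_zero {n : ℕ} {d : Fin n → ℕ} {v : ∀ i, EuclideanSpace ℂ (Fin (d i))}
    (h : ∀ i, v i ≠ 0) : prodState d v ≠ 0 := by
  rw [← inner_self_ne_zero (𝕜 := ℂ), inner_prodState]
  exact Finset.prod_ne_zero_iff.2 fun i _ => inner_self_ne_zero.2 (h i)

section FirstFactor

variable {n : ℕ} {d : Fin (n + 1) → ℕ}

/-- The subspace `α ⊗ ℂ^{d 1} ⊗ ⋯ ⊗ ℂ^{d n}`. -/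
def firstFactorSubspace (d : Fin (n + 1) → ℕ) (α : EuclideanSpace ℂ (Fin (d 0))) :
    Submodule ℂ (GState d) :=
  Submodule.span ℂ (Set.range fun x : ∀ i : Fin n, Fin (d i.succ) =>
    prodState d (Fin.cons α fun i => EuclideanSpace.single (x i) 1))

theorem finrank_firstFactorSubspace {α : EuclideanSpace ℂ (Fin (d 0))} (hα : α ≠ 0) :
    finrank ℂ (firstFactorSubspace d α) = ∏ i : Fin n, d i.succ := by
  refine (Submodule.finrank_span_eq_card_of_inner_eq_zero (fun x => prodState_ne_zero ?_)
    fun x y hxy => ?_).trans (by simp [Fintype.card_pi])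
  · refine Fin.cases ?_ fun i => ?_ <;> simp [hα]
  · obtain ⟨i, hi⟩ := Function.ne_iff.1 hxy
    refine inner_prodState_eq_zero i.succ ?_
    simp [EuclideanSpace.inner_single_left, hi]

theorem span_prodState_isOrtho_firstFactorSubspace {J : Type*}
    {v : J → ∀ i, EuclideanSpace ℂ (Fin (d i))} {α : EuclideanSpace ℂ (Fin (d 0))}
    (hv : ∀ j, ⟪v j 0, α⟫ = 0) :
    Submodule.span ℂ (Set.range fun j => prodState d (v j)) ⟂ firstFactorSubspace d α := by
  rw [firstFactorSubspace, Submodule.isOrtho_span]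
  rintro _ ⟨j, rfl⟩ _ ⟨x, rfl⟩
  exact inner_prodState_eq_zero 0 (by simpa using hv j)

theorem inner_eq_zero_of_prodState_mem_firstFactorSubspace
    {v : ∀ i, EuclideanSpace ℂ (Fin (d i))} (hv : ∀ i, v i ≠ 0) {α β : EuclideanSpace ℂ (Fin (d 0))}
    (hmem : prodState d v ∈ firstFactorSubspace d α) (hβ : ⟪β, α⟫ = 0) : ⟪β, v 0⟫ = 0 := by
  have hortho := span_prodState_isOrtho_firstFactorSubspace (J := Unit)
    (v := fun _ => Fin.cons β (Fin.tail v)) (fun _ => by simpa using hβ)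
  have h := hortho.inner_eq (Submodule.subset_span ⟨(), rfl⟩) hmem
  rw [inner_prodState, Fin.prod_univ_succ] at h
  simpa [Fin.tail, Finset.prod_eq_zero_iff, hv] using h

end FirstFactor

section OrthogonalProductFamily

variable {n : ℕ} {d : Fin (n + 1) → ℕ} {J : Type*} [Fintype J]
  {a : J → ∀ i, EuclideanSpace ℂ (Fin (d i))} {α : EuclideanSpace ℂ (Fin (d 0))}

theorem finrank_span_prodState_orthogonalFirstFactors (hnz : ∀ j i, a j i ≠ 0)
    (horth : ∀ j k, j ≠ k → ⟪prodState d (a j), prodState d (a k)⟫ = 0) :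
    finrank ℂ (Submodule.span ℂ (Set.range fun k : {k // ⟪α, a k 0⟫ = 0} => prodState d (a k)))
      = Fintype.card {k // ⟪α, a k 0⟫ = 0} :=
  Submodule.finrank_span_eq_card_of_inner_eq_zero (fun k => prodState_ne_zero (hnz k))
    fun k l hkl => horth k l (Subtype.coe_injective.ne hkl)

theorem card_add_prod_le (hnz : ∀ j i, a j i ≠ 0)
    (horth : ∀ j k, j ≠ k → ⟪prodState d (a j), prodState d (a k)⟫ = 0) (hα : α ≠ 0) :
    Fintype.card {k // ⟪α, a k 0⟫ = 0} + ∏ i : Fin n, d i.succ ≤ ∏ i, d i := by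
  have h := (span_prodState_isOrtho_firstFactorSubspace
    fun k : {k // ⟪α, a k 0⟫ = 0} => inner_eq_zero_symm.1 k.2).finrank_add_le
  rwa [finrank_span_prodState_orthogonalFirstFactors hnz horth, finrank_firstFactorSubspace hα,
    finrank_gState] at h

theorem inner_eq_zero_of_card_add_prod_eq (hnz : ∀ j i, a j i ≠ 0)
    (horth : ∀ j k, j ≠ k → ⟪prodState d (a j), prodState d (a k)⟫ = 0) (hα : α ≠ 0)
    (h : Fintype.card {k // ⟪α, a k 0⟫ = 0} + ∏ i : Fin n, d i.succ = ∏ i, d i)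
    {j k : J} (hj : ⟪α, a j 0⟫ = 0) (hk : ⟪α, a k 0⟫ ≠ 0) : ⟪a j 0, a k 0⟫ = 0 := by
  set U := Submodule.span ℂ (Set.range fun l : {l // ⟪α, a l 0⟫ = 0} => prodState d (a l))
  have hUW : U ⟂ firstFactorSubspace d α :=
    span_prodState_isOrtho_firstFactorSubspace fun l => inner_eq_zero_symm.1 l.2
  have hdimU : finrank ℂ U = Fintype.card {l // ⟪α, a l 0⟫ = 0} :=
    finrank_span_prodState_orthogonalFirstFactors hnz horth
  have hW : firstFactorSubspace d α = Uᗮ := hUW.eq_orthogonal_of_finrank_add_eq (by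
    rwa [hdimU, finrank_firstFactorSubspace hα, finrank_gState])
  have hkU : Submodule.span ℂ {prodState d (a k)} ⟂ U := by
    rw [Submodule.isOrtho_span]
    rintro _ rfl _ ⟨l, rfl⟩
    exact horth k l fun hkl => hk (hkl ▸ l.2)
  have hmem : prodState d (a k) ∈ firstFactorSubspace d α :=
    hW ▸ hkU.le (Submodule.mem_span_singleton_self _)
  exact inner_eq_zero_of_prodState_mem_firstFactorSubspace (hnz k) hmem (inner_eq_zero_symm.1 hj)

end OrthogonalProductFamily

theorem orthogonal_to_first_factors_bound
    {n : ℕ} {d : Fin (n + 1) → ℕ}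
    (a : Fin (∏ i, d i) → ∀ i, EuclideanSpace ℂ (Fin (d i)))
    (hnz : ∀ j i, a j i ≠ 0)
    (horth : ∀ j k, j ≠ k → ⟪prodState d (a j), prodState d (a k)⟫ = 0)
    (hirr : ∀ p, ¬ ReducibleAt a p)
    (α : EuclideanSpace ℂ (Fin (d 0))) (hα : α ≠ 0) :
    Nat.card {k : Fin (∏ i, d i) // ⟪α, a k 0⟫ = 0}
      ≤ (∏ i, d i) - (∏ i : Fin n, d i.succ) - 1 := by
  rw [Nat.card_eq_fintype_card]
  have hle := card_add_prod_le hnz horth hα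
  by_contra! hlt
  have heq : Fintype.card {k // ⟪α, a k 0⟫ = 0} + ∏ i : Fin n, d i.succ = ∏ i, d i := by omega
  have htail : 0 < ∏ i : Fin n, d i.succ := by
    refine Nat.pos_of_ne_zero fun h0 => ?_
    have hD : ∏ i, d i = d 0 * ∏ i : Fin n, d i.succ := Fin.prod_univ_succ d
    rw [h0, mul_zero] at hD
    omega
  refine hirr 0 ⟨{k | ⟪α, a k 0⟫ = 0}, ?_, ?_,
    fun j hj k hk => inner_eq_zero_of_card_add_prod_eq hnz horth hα heq hj hk⟩
  · obtain ⟨k, hk⟩ := Fintype.card_pos_iff.1 (by omega : 0 < Fintype.card {k // ⟪α, a k 0⟫ = 0})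
    exact ⟨k, hk⟩
  · have hcompl : 0 < Fintype.card {k // ¬⟪α, a k 0⟫ = 0} := by
      rw [Fintype.card_subtype_compl, Fintype.card_fin]
      omega
    obtain ⟨k, hk⟩ := Fintype.card_pos_iff.1 hcompl
    exact ⟨k, hk⟩
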